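/- arXiv:2504.11147 — 6 statements merged into one kernel-verified Lean document; each statement's English description precedes it below -/
import Mathlib

section
/- For every real x > 0, x^{x - 1/2} / (Γ(x) e^x) < 1/√(2π). -/
/-!
Let `F(x) = log Γ(x) - (x - 1/2) log x + x` (`stirlingGap`). By `Γ(x + 1) = x Γ(x)`,
`F(x) - F(x + 1) = (x + 1/2) log (1 + 1/x) - 1`, which is positive because the series
`log (1 + 1/x) = ∑ 2/(2k+1) (2x+1)^(-(2k+1))` starts with `2/(2x+1)`. So `F` decreases strictly
along `x, x + 1, x + 2, …`, and by Euler's limit formula for `Γ` together with Stirling's formula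
for `n!` this sequence tends to `log √(2π)`. Hence `F(x) > log √(2π)`, which is the claim after
exponentiating.
-/

open Real Filter Topology

noncomputable def stirlingGap (x : ℝ) : ℝ := log (Gamma x) - (x - 1/2) * log x + x

lemma two_div_two_mul_add_one_lt_log_one_add_inv {a : ℝ} (ha : 0 < a) :
    2 / (2 * a + 1) < log (1 + a⁻¹) := by
  have hsum := sum_le_hasSum (Finset.range 2) (fun k _ => by positivity)
    (hasSum_log_one_add_inv ha)
  rw [Finset.sum_range_succ, Finset.sum_range_one] at hsum
  have hfirst : (2 : ℝ) * (1 / (2 * ((0 : ℕ) : ℝ) + 1)) * (1 / (2 * a + 1)) ^ (2 * 0 + 1)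
      = 2 / (2 * a + 1) := by
    norm_num [div_eq_mul_inv]
  have hsecond : 0 < (2 : ℝ) * (1 / (2 * ((1 : ℕ) : ℝ) + 1)) * (1 / (2 * a + 1)) ^ (2 * 1 + 1) :=
    by positivity
  linarith

lemma stirlingGap_add_one_lt {x : ℝ} (hx : 0 < x) : stirlingGap (x + 1) < stirlingGap x := by
  have hlog : log (1 + x⁻¹) = log (x + 1) - log x := by
    rw [show 1 + x⁻¹ = (x + 1) / x by field_simp, log_div (by positivity) hx.ne']
  have hdiff : 1 < (x + 1/2) * log (1 + x⁻¹) := by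
    calc (1 : ℝ) = (x + 1/2) * (2 / (2 * x + 1)) := by field_simp
      _ < (x + 1/2) * log (1 + x⁻¹) :=
        mul_lt_mul_of_pos_left (two_div_two_mul_add_one_lt_log_one_add_inv hx) (by linarith)
  rw [hlog] at hdiff
  rw [stirlingGap, stirlingGap, Gamma_add_one hx.ne', log_mul hx.ne' (Gamma_pos_of_pos hx).ne']
  linarith

lemma tendsto_add_mul_log_one_add_div_atTop (a c : ℝ) :
    Tendsto (fun x : ℝ => (x + c) * log (1 + a / x)) atTop (𝓝 a) := by
  have hlog : Tendsto (fun x : ℝ => log (1 + a / x)) atTop (𝓝 0) := by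
    simpa using ((tendsto_const_nhds.div_atTop tendsto_id).const_add 1).log (by norm_num)
  simpa [add_mul] using (tendsto_mul_log_one_add_div_atTop a).add (hlog.const_mul c)

lemma stirlingGap_add_nat_add_one {x : ℝ} (hx : 0 < x) {n : ℕ} (hn : n ≠ 0) :
    stirlingGap (x + n + 1) = log (Stirling.stirlingSeq n) + log 2 / 2
      + (log (Gamma x) - BohrMollerup.logGammaSeq x n) + x + 1
      - (n + (x + 1/2)) * log (1 + (x + 1) / n) := by
  have hn0 : (0 : ℝ) < n := by positivity
  have hGamma : log (Gamma (x + n + 1)) =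
      log (Gamma x) + ∑ m ∈ Finset.range (n + 1), log (x + m) := by
    have := BohrMollerup.f_add_nat_eq (f := log ∘ Gamma)
      (fun hy => by simp [Gamma_add_one hy.ne', log_mul hy.ne' (Gamma_pos_of_pos hy).ne',
        add_comm]) hx (n + 1)
    simpa [add_assoc] using this
  have hquot : log (1 + (x + 1) / n) = log (x + n + 1) - log n := by
    rw [show 1 + (x + 1) / n = (x + n + 1) / n by field_simp; ring,
      log_div (by positivity) hn0.ne']
  rw [stirlingGap, hGamma, hquot, Stirling.log_stirlingSeq_formula, BohrMollerup.logGammaSeq,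
    log_mul two_ne_zero hn0.ne', log_div hn0.ne' (exp_pos 1).ne', log_exp]
  ring

lemma tendsto_stirlingGap_add_nat {x : ℝ} (hx : 0 < x) :
    Tendsto (fun n : ℕ => stirlingGap (x + n + 1)) atTop (𝓝 (log √(2 * π))) := by
  have hStirling : Tendsto (fun n : ℕ => log (Stirling.stirlingSeq n)) atTop (𝓝 (log √π)) :=
    Stirling.tendsto_stirlingSeq_sqrt_pi.log (by positivity)
  have hEuler : Tendsto (fun n => log (Gamma x) - BohrMollerup.logGammaSeq x n) atTop (𝓝 0) := by
    simpa using (BohrMollerup.tendsto_log_gamma hx).const_sub (log (Gamma x))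
  have hlog := (tendsto_add_mul_log_one_add_div_atTop (x + 1) (x + 1/2)).comp
    tendsto_natCast_atTop_atTop
  have hlim := ((((hStirling.add_const (log 2 / 2)).add hEuler).add_const x).add_const 1).sub hlog
  have hval : log √π + log 2 / 2 + 0 + x + 1 - (x + 1) = log √(2 * π) := by
    rw [log_sqrt pi_pos.le, log_sqrt (by positivity), log_mul two_ne_zero pi_ne_zero]
    ring
  rw [hval] at hlim
  refine hlim.congr' ?_
  filter_upwards [eventually_ne_atTop 0] with n hn
  exact (stirlingGap_add_nat_add_one hx hn).symm

lemma log_sqrt_two_pi_lt_stirlingGap {x : ℝ} (hx : 0 < x) : log √(2 * π) < stirlingGap x := by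
  have hanti : Antitone (fun n : ℕ => stirlingGap (x + n + 1)) := by
    refine antitone_nat_of_succ_le fun n => ?_
    have := stirlingGap_add_one_lt (show 0 < x + n + 1 by positivity)
    push_cast
    rw [← add_assoc]
    exact this.le
  calc log √(2 * π) ≤ stirlingGap (x + (0 : ℕ) + 1) :=
        hanti.le_of_tendsto (tendsto_stirlingGap_add_nat hx) 0
    _ < stirlingGap x := by simpa using stirlingGap_add_one_lt hx

theorem stmt_0 (x : ℝ) (hx : 0 < x) :
    x ^ (x - 1/2) / (Real.Gamma x * Real.exp x) < 1 / Real.sqrt (2 * Real.pi) := by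
  have hGamma := Gamma_pos_of_pos hx
  have hsqrt : 0 < √(2 * π) := by positivity
  have hgap := log_sqrt_two_pi_lt_stirlingGap hx
  rw [div_lt_div_iff₀ (by positivity) hsqrt, ← log_lt_log_iff (by positivity) (by positivity),
    log_mul (by positivity) hsqrt.ne', log_rpow hx, one_mul,
    log_mul hGamma.ne' (exp_pos x).ne', log_exp]
  rw [stirlingGap] at hgap
  linarith
end

section
/- For all u, v > 0, (1 + log(1 + u)) / (1 + log(1 + u v)) ≤ 1 + log(1 + 1/v). -/
theorem stmt_1 (u v : ℝ) (hu : 0 < u) (hv : 0 < v) :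
    (1 + Real.log (1 + u)) / (1 + Real.log (1 + u * v)) ≤ 1 + Real.log (1 + 1 / v) := by
  have hb : 0 < Real.log (1 + u * v) := Real.log_pos (by nlinarith)
  have hc : 0 < Real.log (1 + 1 / v) := Real.log_pos (by
    have : 0 < 1 / v := by positivity
    linarith)
  have hkey : Real.log (1 + u) ≤ Real.log (1 + u * v) + Real.log (1 + 1 / v) := by
    rw [← Real.log_mul (by nlinarith) (by positivity)]
    apply Real.log_le_log (by linarith)
    have hv' : 0 < 1 / v := by positivity
    have : u * v * (1 / v) = u := by field_simp
    nlinarith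
  rw [div_le_iff₀ (by linarith)]
  nlinarith [mul_pos hb hc]
end

section
/- For all u, v > 0, (1 + log(1 + log(1 + u))) / (1 + log(1 + log(1 + u v))) ≤ 1 + log(1 + log(1 + 1/v)). -/
lemma log1p_nonneg {a : ℝ} (ha : 0 ≤ a) : 0 ≤ Real.log (1 + a) :=
  Real.log_nonneg (by linarith)

lemma log1p_subadd {a b : ℝ} (ha : 0 ≤ a) (hb : 0 ≤ b) :
    Real.log (1 + (a + b)) ≤ Real.log (1 + a) + Real.log (1 + b) := by
  rw [← Real.log_mul (by linarith) (by linarith)]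
  exact Real.log_le_log (by linarith) (by nlinarith)

lemma log1p_mul_le {a b : ℝ} (ha : 0 ≤ a) (hb : 0 ≤ b) :
    Real.log (1 + a * b) ≤ Real.log (1 + a) + Real.log (1 + b) := by
  rw [← Real.log_mul (by linarith) (by linarith)]
  exact Real.log_le_log (by nlinarith) (by nlinarith)

lemma f_submul {a b : ℝ} (ha : 0 < a) (hb : 0 < b) :
    1 + Real.log (1 + Real.log (1 + a * b)) ≤
      (1 + Real.log (1 + Real.log (1 + a))) * (1 + Real.log (1 + Real.log (1 + b))) := by
  have hA : 0 ≤ Real.log (1 + a) := log1p_nonneg ha.le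
  have hB : 0 ≤ Real.log (1 + b) := log1p_nonneg hb.le
  have h1 : Real.log (1 + a * b) ≤ Real.log (1 + a) + Real.log (1 + b) :=
    log1p_mul_le ha.le hb.le
  have hab : 0 ≤ Real.log (1 + a * b) := log1p_nonneg (mul_pos ha hb).le
  have h2 : Real.log (1 + Real.log (1 + a * b)) ≤
      Real.log (1 + (Real.log (1 + a) + Real.log (1 + b))) :=
    Real.log_le_log (by linarith) (by linarith)
  have h3 := log1p_subadd hA hB
  have hA2 : 0 ≤ Real.log (1 + Real.log (1 + a)) := log1p_nonneg hA
  have hB2 : 0 ≤ Real.log (1 + Real.log (1 + b)) := log1p_nonneg hB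
  nlinarith [mul_nonneg hA2 hB2]

theorem stmt_3 (u v : ℝ) (hu : 0 < u) (hv : 0 < v) :
    (1 + Real.log (1 + Real.log (1 + u))) / (1 + Real.log (1 + Real.log (1 + u * v)))
      ≤ 1 + Real.log (1 + Real.log (1 + 1 / v)) := by
  have hpos : 0 < 1 + Real.log (1 + Real.log (1 + u * v)) := by
    have := log1p_nonneg (log1p_nonneg (mul_pos hu hv).le)
    linarith
  rw [div_le_iff₀ hpos]
  have h := f_submul (mul_pos hu hv) (one_div_pos.mpr hv)
  have : u * v * (1 / v) = u := by field_simp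
  rw [this] at h
  linarith [h]
end

section
/- For all α > 0 and Δ > 0, ∫₀^{1/(1+Δ)} (α^α / Γ(α)) · e^{-α/u} / u^{1+α} du = ∫_Δ^∞ (α^α e^{-α} / Γ(α)) · (1/(1+s)) · e^{-α(s - log(1+s))} ds, and this is bounded above by ∫₁^∞ α^{1/2} Δ exp(-(t²/4)(α^{1/2} Δ)²) dt + ∫₁^∞ (αΔ)^{1/2} exp(-(t/4) αΔ) dt. -/
/-!
The equality is the substitution `u = 1 / (1 + s)`.

For the bound, first `α ^ α * exp (-α) / Γ(α) ≤ √α`: substituting `x = α * exp (-y)` in the part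
of the Gamma integral over `(0, α)` and using `exp (-y) ≤ 1 - y + y ^ 2 / 2` for `y ≥ 0` gives
`Γ(α) ≥ α ^ α * exp (-α) * √(π / (2 * α))`. Next, `s - log (1 + s)` is at least `s ^ 2 / 4` for
`s ≤ 1` and at least `s / 4` for `s ≥ 1`, so the exponential factor is at most
`exp (-α * s ^ 2 / 4) + exp (-α * s / 4)`. After scaling `s = Δ * t`, the prefactor
`Δ / (1 + Δ * t)` is at most `Δ` in the first term and at most `Δ / (1 + Δ) ≤ √Δ` in the second.
-/

open MeasureTheory Real Set

lemma image_inv_one_add_Ioi {Δ : ℝ} (hΔ : -1 < Δ) :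
    (fun s : ℝ => (1 + s)⁻¹) '' Ioi Δ = Ioo 0 (1 + Δ)⁻¹ := by
  ext u
  constructor
  · rintro ⟨s, hs, rfl⟩
    have hs' : Δ < s := hs
    exact ⟨inv_pos.2 (by linarith), inv_strictAnti₀ (by linarith) (by linarith)⟩
  · rintro ⟨hu0, hu⟩
    refine ⟨u⁻¹ - 1, ?_, by simp⟩
    have : 1 + Δ < u⁻¹ := (lt_inv_comm₀ hu0 (by linarith)).1 hu
    show Δ < u⁻¹ - 1
    linarith

lemma integral_Ioo_exp_neg_div_eq_integral_Ioi (c α : ℝ) {Δ : ℝ} (hΔ : -1 < Δ) :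
    ∫ u in Ioo 0 (1 / (1 + Δ)), c * exp (-α / u) / u ^ (1 + α)
      = ∫ s in Ioi Δ, c * exp (-α) * (1 / (1 + s)) * exp (-α * (s - log (1 + s))) := by
  have hderiv : ∀ s ∈ Ioi Δ,
      HasDerivWithinAt (fun s : ℝ => (1 + s)⁻¹) (-1 / (1 + s) ^ 2) (Ioi Δ) s := fun s hs => by
    have : 1 + s ≠ 0 := by have : Δ < s := hs; linarith
    exact (((hasDerivAt_id' s).const_add 1).inv this).hasDerivWithinAt
  have hinj : InjOn (fun s : ℝ => (1 + s)⁻¹) (Ioi Δ) := fun s _ t _ h =>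
    add_left_cancel (inv_injective h)
  rw [one_div, ← image_inv_one_add_Ioi hΔ,
    integral_image_eq_integral_abs_deriv_smul measurableSet_Ioi hderiv hinj]
  refine setIntegral_congr_fun measurableSet_Ioi fun s hs => ?_
  have hpos : 0 < 1 + s := by have : Δ < s := hs; linarith
  have hexp : exp (-α * (s - log (1 + s))) = exp (-α * s) * (1 + s) ^ α := by
    rw [rpow_def_of_pos hpos, ← exp_add]; ring_nf
  rw [hexp, smul_eq_mul, abs_div, abs_neg, abs_one, abs_of_pos (by positivity), inv_rpow hpos.le,
    rpow_add hpos, rpow_one, div_inv_eq_mul, div_inv_eq_mul,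
    show -α * (1 + s) = -α + -α * s by ring, exp_add]
  field_simp

lemma exp_le_quadratic_of_nonpos {x : ℝ} (hx : x ≤ 0) : exp x ≤ 1 + x + x ^ 2 / 2 := by
  have hanti : Antitone fun y : ℝ => 1 + y + y ^ 2 / 2 - exp y := by
    refine antitone_of_deriv_nonpos (by fun_prop) fun y => ?_
    have hderiv : HasDerivAt (fun y : ℝ => 1 + y + y ^ 2 / 2 - exp y) (1 + y - exp y) y := by
      refine ((((hasDerivAt_id' y).const_add 1).fun_add
        ((hasDerivAt_pow 2 y).div_const 2)).fun_sub (hasDerivAt_exp y)).congr_deriv ?_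
      norm_num
    rw [hderiv.deriv]
    linarith [add_one_le_exp y]
  simpa using hanti hx

lemma image_mul_exp_neg_Ioi {a : ℝ} (ha : 0 < a) :
    (fun y => a * exp (-y)) '' Ioi 0 = Ioo 0 a := by
  ext x
  constructor
  · rintro ⟨y, hy, rfl⟩
    exact ⟨by positivity, mul_lt_of_lt_one_right ha (exp_lt_one_iff.2 (neg_lt_zero.2 hy))⟩
  · rintro ⟨hx0, hxa⟩
    refine ⟨-log (x / a), neg_pos.2 (log_neg (by positivity) ((div_lt_one ha).2 hxa)), ?_⟩
    simp only [neg_neg, exp_log (div_pos hx0 ha)]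
    field_simp

lemma integrableOn_and_integral_Ioo_GammaIntegrand_eq (α : ℝ) (hα : 0 < α) :
    IntegrableOn (fun y => α ^ α * exp (-α * y - α * exp (-y))) (Ioi 0) ∧
      ∫ x in Ioo 0 α, exp (-x) * x ^ (α - 1)
        = ∫ y in Ioi 0, α ^ α * exp (-α * y - α * exp (-y)) := by
  have hderiv : ∀ y ∈ Ioi (0 : ℝ),
      HasDerivWithinAt (fun y => α * exp (-y)) (-(α * exp (-y))) (Ioi 0) y := fun y _ => by
    simpa using ((hasDerivAt_neg y).exp.const_mul α).hasDerivWithinAt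
  have hinj : InjOn (fun y => α * exp (-y)) (Ioi 0) := fun y _ z _ h =>
    neg_injective (exp_injective (mul_left_cancel₀ hα.ne' h))
  have hsubst : ∀ y : ℝ,
      |-(α * exp (-y))| • (exp (-(α * exp (-y))) * (α * exp (-y)) ^ (α - 1))
        = α ^ α * exp (-α * y - α * exp (-y)) := fun y => by
    rw [abs_neg, abs_of_pos (by positivity), smul_eq_mul, mul_rpow hα.le (exp_pos _).le,
      rpow_def_of_pos (exp_pos _), log_exp, rpow_sub_one hα.ne']
    rw [show exp (-α * y - α * exp (-y))
        = exp (-y) * exp (-(α * exp (-y))) * exp (-y * (α - 1)) by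
      rw [← exp_add, ← exp_add]; ring_nf]
    field_simp
  have hint := ((GammaIntegral_convergent hα).mono_set (Ioo_subset_Ioi_self : Ioo 0 α ⊆ Ioi 0))
  rw [← image_mul_exp_neg_Ioi hα] at hint ⊢
  rw [integrableOn_image_iff_integrableOn_abs_deriv_smul measurableSet_Ioi hderiv hinj] at hint
  rw [integral_image_eq_integral_abs_deriv_smul measurableSet_Ioi hderiv hinj]
  simp only [hsubst] at hint ⊢
  exact ⟨hint, trivial⟩

lemma rpow_mul_exp_neg_le_sqrt_mul_Gamma {α : ℝ} (hα : 0 < α) :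
    α ^ α * exp (-α) ≤ √α * Gamma α := by
  obtain ⟨hint, hsubst⟩ := integrableOn_and_integral_Ioo_GammaIntegrand_eq α hα
  have hGamma : α ^ α * (exp (-α) * (√(π / (α / 2)) / 2)) ≤ Gamma α := calc
    α ^ α * (exp (-α) * (√(π / (α / 2)) / 2))
        = ∫ y in Ioi 0, α ^ α * exp (-α) * exp (-(α / 2) * y ^ 2) := by
          rw [integral_const_mul, integral_gaussian_Ioi]; ring
    _ ≤ ∫ y in Ioi 0, α ^ α * exp (-α * y - α * exp (-y)) := by
          refine setIntegral_mono_on ?_ hint measurableSet_Ioi fun y hy => ?_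
          · exact ((integrable_exp_neg_mul_sq (half_pos hα)).const_mul _).integrableOn
          · have := exp_le_quadratic_of_nonpos (neg_nonpos.2 (le_of_lt hy))
            rw [mul_assoc, ← exp_add]
            gcongr
            nlinarith
    _ = ∫ x in Ioo 0 α, exp (-x) * x ^ (α - 1) := hsubst.symm
    _ ≤ ∫ x in Ioi 0, exp (-x) * x ^ (α - 1) := by
          refine setIntegral_mono_set (GammaIntegral_convergent hα) ?_
            Ioo_subset_Ioi_self.eventuallyLE
          filter_upwards [ae_restrict_mem measurableSet_Ioi] with x hx
          exact mul_nonneg (exp_pos _).le (rpow_nonneg (le_of_lt hx) _)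
    _ = Gamma α := (Gamma_eq_integral hα).symm
  have hsqrt : 1 ≤ √α * (√(π / (α / 2)) / 2) := by
    have h2pi : √α * √(π / (α / 2)) = √(2 * π) := by
      rw [← sqrt_mul hα.le]
      congr 1
      field_simp
    have : 2 ≤ √(2 * π) := le_sqrt_of_sq_le (by nlinarith [pi_gt_three])
    linarith
  calc α ^ α * exp (-α) ≤ α ^ α * exp (-α) * (√α * (√(π / (α / 2)) / 2)) :=
        le_mul_of_one_le_right (by positivity) hsqrt
    _ = √α * (α ^ α * (exp (-α) * (√(π / (α / 2)) / 2))) := by ring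
    _ ≤ √α * Gamma α := by gcongr

lemma log_one_add_le_sub_sq_div_four {s : ℝ} (h0 : 0 ≤ s) (h1 : s ≤ 1) :
    log (1 + s) ≤ s - s ^ 2 / 4 := by
  have hexp := quadratic_le_exp_of_nonneg (x := s - s ^ 2 / 4) (by nlinarith)
  rw [log_le_iff_le_exp (by linarith)]
  nlinarith

lemma log_one_add_le_three_mul_div_four {s : ℝ} (h1 : 1 ≤ s) : log (1 + s) ≤ 3 * s / 4 := by
  have hhalf := log_le_sub_one_of_pos (x := (1 + s) / 2) (by linarith)
  rw [log_div (by linarith) two_ne_zero] at hhalf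
  linarith [log_two_lt_d9]

lemma exp_neg_mul_sub_log_one_add_le {α s : ℝ} (hα : 0 ≤ α) (hs : 0 ≤ s) :
    exp (-α * (s - log (1 + s))) ≤ exp (-(α / 4) * s ^ 2) + exp (-(α / 4) * s) := by
  rcases le_total s 1 with h | h
  · have hlog := log_one_add_le_sub_sq_div_four hs h
    have : exp (-α * (s - log (1 + s))) ≤ exp (-(α / 4) * s ^ 2) := by
      rw [exp_le_exp]; nlinarith
    linarith [exp_pos (-(α / 4) * s)]
  · have hlog := log_one_add_le_three_mul_div_four h
    have : exp (-α * (s - log (1 + s))) ≤ exp (-(α / 4) * s) := by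
      rw [exp_le_exp]; nlinarith
    linarith [exp_pos (-(α / 4) * s ^ 2)]

lemma div_one_add_le_sqrt {x : ℝ} (hx : 0 ≤ x) : x / (1 + x) ≤ √x := by
  rw [div_le_iff₀ (by linarith)]
  nlinarith [sq_sqrt hx, sqrt_nonneg x, sq_nonneg (1 - √x)]

lemma mul_exp_neg_mul_sub_log_le {α Δ c t : ℝ} (hα : 0 ≤ α) (hΔ : 0 ≤ Δ) (hc0 : 0 ≤ c)
    (hc : c ≤ √α) (ht : 1 ≤ t) :
    Δ * (c * (1 / (1 + Δ * t)) * exp (-α * (Δ * t - log (1 + Δ * t))))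
      ≤ √α * Δ * exp (-(t ^ 2 / 4) * (√α * Δ) ^ 2) + √(α * Δ) * exp (-(t / 4) * (α * Δ)) := by
  have hs : Δ ≤ Δ * t := le_mul_of_one_le_right hΔ ht
  have hcoef_le : Δ * (c * (1 / (1 + Δ * t))) ≤ √α * (Δ / (1 + Δ)) := by
    rw [mul_one_div, ← mul_div_assoc, mul_comm Δ c]
    calc c * Δ / (1 + Δ * t) ≤ √α * Δ / (1 + Δ) := by gcongr
      _ = √α * (Δ / (1 + Δ)) := mul_div_assoc _ _ _
  have hcoef₁ : Δ * (c * (1 / (1 + Δ * t))) ≤ √α * Δ :=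
    hcoef_le.trans (by gcongr; exact div_le_self hΔ (by linarith))
  have hcoef₂ : Δ * (c * (1 / (1 + Δ * t))) ≤ √(α * Δ) :=
    hcoef_le.trans (by rw [sqrt_mul hα]; gcongr; exact div_one_add_le_sqrt hΔ)
  have hsq : -(t ^ 2 / 4) * (√α * Δ) ^ 2 = -(α / 4) * (Δ * t) ^ 2 := by
    rw [mul_pow, sq_sqrt hα]; ring
  rw [hsq, show -(t / 4) * (α * Δ) = -(α / 4) * (Δ * t) by ring]
  calc Δ * (c * (1 / (1 + Δ * t)) * exp (-α * (Δ * t - log (1 + Δ * t))))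
      ≤ Δ * (c * (1 / (1 + Δ * t)))
          * (exp (-(α / 4) * (Δ * t) ^ 2) + exp (-(α / 4) * (Δ * t))) := by
        rw [← mul_assoc]
        gcongr
        exact exp_neg_mul_sub_log_one_add_le hα (by positivity)
    _ ≤ √α * Δ * exp (-(α / 4) * (Δ * t) ^ 2) + √(α * Δ) * exp (-(α / 4) * (Δ * t)) := by
        rw [mul_add]
        gcongr

lemma integral_Ioi_mul_exp_neg_mul_sub_log_le {α Δ c : ℝ} (hα : 0 < α) (hΔ : 0 < Δ)
    (hc0 : 0 ≤ c) (hc : c ≤ √α) :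
    ∫ s in Ioi Δ, c * (1 / (1 + s)) * exp (-α * (s - log (1 + s)))
      ≤ (∫ t in Ioi 1, √α * Δ * exp (-(t ^ 2 / 4) * (√α * Δ) ^ 2))
        + ∫ t in Ioi 1, √(α * Δ) * exp (-(t / 4) * (α * Δ)) := by
  have hgauss :
      IntegrableOn (fun t : ℝ => √α * Δ * exp (-(t ^ 2 / 4) * (√α * Δ) ^ 2)) (Ioi 1) := by
    have := (integrable_exp_neg_mul_sq (b := (√α * Δ) ^ 2 / 4) (by positivity)).const_mul
      (√α * Δ)
    refine this.integrableOn.congr_fun (fun t _ => ?_) measurableSet_Ioi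
    ring_nf
  have hexp : IntegrableOn (fun t : ℝ => √(α * Δ) * exp (-(t / 4) * (α * Δ))) (Ioi 1) := by
    have := (exp_neg_integrableOn_Ioi 1 (b := α * Δ / 4) (by positivity)).const_mul √(α * Δ)
    refine IntegrableOn.congr_fun this (fun t _ => ?_) measurableSet_Ioi
    ring_nf
  have hscale := integral_comp_mul_left_Ioi'
    (fun s => c * (1 / (1 + s)) * exp (-α * (s - log (1 + s)))) 1 hΔ
  rw [mul_one, smul_eq_mul, ← integral_const_mul] at hscale
  rw [← integral_add hgauss hexp, ← hscale]
  refine integral_mono_of_nonneg ?_ (hgauss.add hexp) ?_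
  · filter_upwards [ae_restrict_mem measurableSet_Ioi] with t ht
    have : 0 < 1 + Δ * t := by nlinarith [mem_Ioi.1 ht]
    positivity
  · filter_upwards [ae_restrict_mem measurableSet_Ioi] with t ht
    exact mul_exp_neg_mul_sub_log_le hα.le hΔ.le hc0 hc (le_of_lt ht)

theorem stmt_9 (α Δ : ℝ) (hα : 0 < α) (hΔ : 0 < Δ) :
    (∫ u in Set.Ioo (0 : ℝ) (1 / (1 + Δ)),
        (α ^ α / Real.Gamma α) * Real.exp (-α / u) / u ^ (1 + α))
      = (∫ s in Set.Ioi Δ,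
          (α ^ α * Real.exp (-α) / Real.Gamma α) * (1 / (1 + s)) *
            Real.exp (-α * (s - Real.log (1 + s)))) ∧
    (∫ u in Set.Ioo (0 : ℝ) (1 / (1 + Δ)),
        (α ^ α / Real.Gamma α) * Real.exp (-α / u) / u ^ (1 + α))
      ≤ (∫ t in Set.Ioi (1 : ℝ),
            α ^ (1/2 : ℝ) * Δ * Real.exp (-(t^2 / 4) * (α ^ (1/2 : ℝ) * Δ)^2))
        + ∫ t in Set.Ioi (1 : ℝ),
            (α * Δ) ^ (1/2 : ℝ) * Real.exp (-(t / 4) * (α * Δ)) := by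
  have hsubst :=
    integral_Ioo_exp_neg_div_eq_integral_Ioi (α ^ α / Gamma α) α (by linarith : -1 < Δ)
  rw [div_mul_eq_mul_div (α ^ α) (Gamma α) (exp (-α))] at hsubst
  have hGamma := Gamma_pos_of_pos hα
  refine ⟨hsubst, ?_⟩
  rw [hsubst, ← sqrt_eq_rpow, ← sqrt_eq_rpow]
  exact integral_Ioi_mul_exp_neg_mul_sub_log_le hα hΔ (by positivity)
    ((div_le_iff₀ hGamma).2 (rpow_mul_exp_neg_le_sqrt_mul_Gamma hα))
end

section
/- For all α > 0 and K > 0, ∫_K^∞ (α^α / Γ(α)) · e^{-α/u} / u^{1+α} du ≤ min{ (α^α / Γ(α+1)) K^{-α}, α^{-1/2} (K/e)^{-α} }. -/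
/-!
Since `e^{-α/u} ≤ 1`, the integral is at most `α^α / Γ(α) · ∫_K^∞ u^{-1-α} du
= α^α / Γ(α + 1) · K^{-α}`. The second bound then amounts to `Γ(x) ≥ x^{x-1/2} e^{-x}`.
The remainder `R(x) = log Γ(x) - (x - 1/2) log x + x` satisfies `R(x + 1) ≤ R(x)` because
`(x + 1/2) log(1 + 1/x) ≥ 1`, so it suffices to take `x ≥ 2`. There log-convexity of `Γ`
gives `log Γ(x) ≥ log ⌊x⌋! - (⌊x⌋ + 1 - x) log(⌊x⌋ + 1)`, and Stirling's lower bound for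
`⌊x⌋!` closes the gap with room to spare, as `log √(2π) > 1/2`.
-/

open MeasureTheory

namespace Real

lemma two_div_two_mul_add_one_le_log_one_add_inv {x : ℝ} (hx : 0 < x) :
    2 / (2 * x + 1) ≤ log (1 + x⁻¹) := by
  simpa [div_eq_mul_inv] using le_hasSum (hasSum_log_one_add_inv hx) 0 fun k _ => by positivity

/-- The error in `log Γ(x) ≈ (x - 1/2) log x - x`; it tends to `log √(2π)`, not to `0`. -/
noncomputable def stirlingRemainder (x : ℝ) : ℝ :=
  log (Gamma x) - ((x - 1 / 2) * log x - x)

lemma stirlingRemainder_add_one_le {x : ℝ} (hx : 0 < x) :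
    stirlingRemainder (x + 1) ≤ stirlingRemainder x := by
  have hlog : log (1 + x⁻¹) = log (x + 1) - log x := by
    rw [← log_div (by positivity) hx.ne']
    congr 1
    field_simp
  have h := two_div_two_mul_add_one_le_log_one_add_inv hx
  rw [hlog, div_le_iff₀' (by positivity)] at h
  simp only [stirlingRemainder]
  rw [Gamma_add_one hx.ne', log_mul hx.ne' (Gamma_pos_of_pos hx).ne']
  linarith

lemma log_Gamma_le_log_Gamma_add_mul_log {x b : ℝ} (hx : 0 < x) (hxb : x ≤ b) :
    log (Gamma b) ≤ log (Gamma x) + (b - x) * log b := by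
  rcases hxb.eq_or_lt with rfl | hxb
  · simp
  have hb : 0 < b := hx.trans hxb
  have hslope := convexOn_log_Gamma.slope_mono_adjacent hx (by simp; linarith : b + 1 ∈ Set.Ioi 0)
    hxb (lt_add_one b)
  simp only [Function.comp_apply, add_sub_cancel_left, div_one] at hslope
  rw [Gamma_add_one hb.ne', log_mul hb.ne' (Gamma_pos_of_pos hb).ne', div_le_iff₀ (by linarith)]
    at hslope
  linarith

lemma log_le_log_add_sub_div {y z : ℝ} (hy : 0 < y) (hz : 0 < z) :
    log y ≤ log z + (y - z) / z := by
  have h := log_le_sub_one_of_pos (div_pos hy hz)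
  rw [log_div hy.ne' hz.ne', div_sub_one hz.ne'] at h
  linarith

lemma stirlingRemainder_nonneg_of_two_le {x : ℝ} (hx : 2 ≤ x) : 0 ≤ stirlingRemainder x := by
  have hn : 2 ≤ ⌊x⌋₊ := Nat.le_floor (by exact_mod_cast hx)
  have hNx : (⌊x⌋₊ : ℝ) ≤ x := Nat.floor_le (by linarith)
  have hxN : x < ⌊x⌋₊ + 1 := Nat.lt_floor_add_one x
  have hchord := log_Gamma_le_log_Gamma_add_mul_log (by linarith) hxN.le
  rw [Gamma_nat_eq_factorial] at hchord
  have hfact := Stirling.le_log_factorial_stirling (n := ⌊x⌋₊) (by omega)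
  set N : ℝ := (⌊x⌋₊ : ℝ)
  have hN2 : (2 : ℝ) ≤ N := by simp only [N]; exact_mod_cast hn
  have hN : 0 < N := by linarith
  have h2π : 1 ≤ log (2 * π) := by
    rw [← log_exp 1]
    exact log_le_log (exp_pos 1) (by linarith [exp_one_lt_d9, pi_gt_three])
  have hlog_x := mul_le_mul_of_nonneg_left (log_le_log_add_sub_div (y := x) (by linarith) hN)
    (by linarith : 0 ≤ x - 1 / 2)
  have hlog_succ := mul_le_mul_of_nonneg_left
    (log_le_log_add_sub_div (y := N + 1) (by linarith) hN) (by linarith : 0 ≤ N + 1 - x)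
  -- after the `log N` terms cancel, what remains is `1/2 - q / N` with `q ≤ 1 ≤ N / 2`
  have hq : ((x - N) ^ 2 - 3 / 2 * (x - N) + 1) / N ≤ 1 / 2 := by
    rw [div_le_iff₀ hN]; nlinarith
  have hsum : (x - 1 / 2) * (log N + (x - N) / N) + (N + 1 - x) * (log N + (N + 1 - N) / N)
      = (N + 1 / 2) * log N + (x - N) + ((x - N) ^ 2 - 3 / 2 * (x - N) + 1) / N := by
    field_simp; ring
  unfold stirlingRemainder
  linarith

lemma stirlingRemainder_nonneg {x : ℝ} (hx : 0 < x) : 0 ≤ stirlingRemainder x := by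
  have h1 := stirlingRemainder_add_one_le hx
  have h2 := stirlingRemainder_add_one_le (x := x + 1) (by linarith)
  have h3 := stirlingRemainder_nonneg_of_two_le (x := x + 1 + 1) (by linarith)
  linarith

lemma rpow_sub_half_mul_exp_neg_le_Gamma {x : ℝ} (hx : 0 < x) :
    x ^ (x - 1 / 2) * exp (-x) ≤ Gamma x := by
  have h := stirlingRemainder_nonneg hx
  rw [stirlingRemainder, sub_nonneg] at h
  calc x ^ (x - 1 / 2) * exp (-x) = exp ((x - 1 / 2) * log x - x) := by
        rw [rpow_def_of_pos hx, ← exp_add]; ring_nf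
    _ ≤ exp (log (Gamma x)) := exp_le_exp.2 h
    _ = Gamma x := exp_log (Gamma_pos_of_pos hx)

lemma rpow_self_div_Gamma_add_one_le {x : ℝ} (hx : 0 < x) :
    x ^ x / Gamma (x + 1) ≤ x ^ (-(1 / 2) : ℝ) * exp x := by
  rw [Gamma_add_one hx.ne', div_le_iff₀ (by positivity [Gamma_pos_of_pos hx])]
  have hpow : x ^ (-(1 / 2) : ℝ) * x ^ (x - 1 / 2 + 1) = x ^ x := by
    rw [← rpow_add hx]; ring_nf
  have hexp : exp x * exp (-x) = 1 := by rw [← exp_add, add_neg_cancel, exp_zero]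
  calc x ^ x = x ^ (-(1 / 2) : ℝ) * exp x * (x * (x ^ (x - 1 / 2) * exp (-x))) := by
        rw [← hpow, rpow_add_one hx.ne']
        linear_combination (-(x ^ (-(1 / 2) : ℝ) * x ^ (x - 1 / 2) * x)) * hexp
    _ ≤ x ^ (-(1 / 2) : ℝ) * exp x * (x * Gamma x) := by
        gcongr; exact rpow_sub_half_mul_exp_neg_le_Gamma hx

end Real

open Real

lemma setIntegral_Ioi_exp_neg_div_div_rpow_le {a c K : ℝ} (ha : 0 < a) (hc : 0 ≤ c)
    (hK : 0 < K) :
    ∫ u in Set.Ioi K, exp (-c / u) / u ^ (1 + a) ≤ K ^ (-a) / a := by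
  have hexp : -1 - a < -1 := by linarith
  calc ∫ u in Set.Ioi K, exp (-c / u) / u ^ (1 + a)
      ≤ ∫ u in Set.Ioi K, u ^ (-1 - a) := by
        refine integral_mono_of_nonneg ?_ (integrableOn_Ioi_rpow_of_lt hexp hK) ?_
        · filter_upwards [ae_restrict_mem measurableSet_Ioi] with u hu
          have : 0 < u := hK.trans hu
          positivity
        · filter_upwards [ae_restrict_mem measurableSet_Ioi] with u hu
          have hu : 0 < u := hK.trans hu
          rw [show -1 - a = -(1 + a) by ring, rpow_neg hu.le, ← one_div]
          gcongr
          exact exp_le_one_iff.2 (by rw [neg_div]; exact neg_nonpos.2 (by positivity))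
    _ = K ^ (-a) / a := by
        rw [integral_Ioi_rpow_of_lt hexp hK, show -1 - a + 1 = -a by ring, neg_div_neg_eq]

theorem stmt_10 (α K : ℝ) (hα : 0 < α) (hK : 0 < K) :
    (∫ u in Set.Ioi K, (α ^ α / Real.Gamma α) * Real.exp (-α / u) / u ^ (1 + α))
      ≤ min ((α ^ α / Real.Gamma (α + 1)) * K ^ (-α))
          (α ^ (-(1/2) : ℝ) * (K / Real.exp 1) ^ (-α)) := by
  have hfirst : (∫ u in Set.Ioi K, (α ^ α / Gamma α) * exp (-α / u) / u ^ (1 + α))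
      ≤ (α ^ α / Gamma (α + 1)) * K ^ (-α) := by
    simp_rw [mul_div_assoc]
    rw [integral_const_mul]
    calc α ^ α / Gamma α * ∫ u in Set.Ioi K, exp (-α / u) / u ^ (1 + α)
        ≤ α ^ α / Gamma α * (K ^ (-α) / α) := by
          have hΓ := Gamma_pos_of_pos hα
          gcongr; exact setIntegral_Ioi_exp_neg_div_div_rpow_le hα hα.le hK
      _ = α ^ α / Gamma (α + 1) * K ^ (-α) := by
          rw [Gamma_add_one hα.ne']; field_simp
  refine le_min hfirst (hfirst.trans ?_)
  calc α ^ α / Gamma (α + 1) * K ^ (-α) ≤ α ^ (-(1 / 2) : ℝ) * exp α * K ^ (-α) := by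
        gcongr; exact rpow_self_div_Gamma_add_one_le hα
    _ = α ^ (-(1/2) : ℝ) * (K / exp 1) ^ (-α) := by
        rw [div_rpow hK.le (exp_pos 1).le, exp_one_rpow, exp_neg, div_inv_eq_mul]
        ring
end

section
/- Let ν, σ > 0 and let x, β ∈ ℝ^p be fixed. Define p(t | β, σ) = C(ν) · σ^{-1} t^{-1} [ (log t − xᵀβ)²/(2σ²) + ν/2 ]^{-(1/2 + ν/2)} for t > 0, where C(ν) = Γ((1+ν)/2)(ν/2)^{ν/2}/(√(2π) Γ(ν/2)). Then the ratio p(t | β, σ) / p(t | 0, 1) converges to σ^ν as t → ∞. -/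
/-!
The normalising constants and the factors `t⁻¹` cancel, so the ratio is `σ⁻¹ (A/B)^(-(1+ν)/2)`
with `A = (log t - xᵀβ)²/(2σ²) + ν/2` and `B = (log t)²/2 + ν/2`. Both are quadratics in `log t`,
so `A/B → σ⁻²`, and the ratio tends to `σ⁻¹ (σ⁻²)^(-(1+ν)/2) = σ^ν`.
-/

open Filter Topology Real

theorem tendsto_sq_sub_div_add_div_sq_div_add_atTop (μ a b c d : ℝ) (hc : c ≠ 0) :
    Tendsto (fun u : ℝ => ((u - μ) ^ 2 / a + b) / (u ^ 2 / c + d)) atTop (𝓝 (c / a)) := by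
  -- after dividing through by `u²`, this is `g u⁻¹` with `g` continuous at `0`
  set g : ℝ → ℝ := fun v => ((1 - μ * v) ^ 2 / a + b * v ^ 2) / (1 / c + d * v ^ 2)
  have hg : ContinuousAt g 0 := by
    refine ContinuousAt.div (by fun_prop) (by fun_prop) ?_
    simpa using hc
  have hg0 : g 0 = c / a := by
    simp only [g]; field_simp; ring
  have hlim : Tendsto (fun u : ℝ => g u⁻¹) atTop (𝓝 (c / a)) :=
    hg0 ▸ hg.tendsto.comp tendsto_inv_atTop_zero
  refine hlim.congr' ?_
  filter_upwards [eventually_ne_atTop 0] with u hu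
  simp only [g]
  field_simp

noncomputable def studentTConst (ν : ℝ) : ℝ :=
  Gamma ((1 + ν) / 2) * (ν / 2) ^ (ν / 2) / (√(2 * π) * Gamma (ν / 2))

theorem studentTConst_pos {ν : ℝ} (hν : 0 < ν) : 0 < studentTConst ν := by
  have := Gamma_pos_of_pos (by linarith : 0 < (1 + ν) / 2)
  have := Gamma_pos_of_pos (by linarith : 0 < ν / 2)
  unfold studentTConst
  positivity

noncomputable def logStudentTDensity (ν μ σ t : ℝ) : ℝ :=
  studentTConst ν * σ⁻¹ * t⁻¹ * ((log t - μ) ^ 2 / (2 * σ ^ 2) + ν / 2) ^ (-(1 / 2 + ν / 2))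

theorem logStudentTDensity_div_zero_one {ν : ℝ} (hν : 0 < ν) (μ σ : ℝ) {t : ℝ} (ht : t ≠ 0) :
    logStudentTDensity ν μ σ t / logStudentTDensity ν 0 1 t =
      σ⁻¹ * (((log t - μ) ^ 2 / (2 * σ ^ 2) + ν / 2) / ((log t) ^ 2 / 2 + ν / 2)) ^
        (-(1 / 2 + ν / 2)) := by
  have hC := (studentTConst_pos hν).ne'
  have hB : 0 < (log t) ^ 2 / 2 + ν / 2 := by positivity
  rw [div_rpow (by positivity) hB.le]
  have := (rpow_pos_of_pos hB (-(1 / 2 + ν / 2))).ne'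
  simp only [logStudentTDensity, sub_zero, one_pow, mul_one, inv_one]
  field_simp

theorem inv_mul_inv_sq_rpow {σ : ℝ} (hσ : 0 < σ) (ν : ℝ) :
    σ⁻¹ * ((σ ^ 2)⁻¹) ^ (-(1 / 2 + ν / 2)) = σ ^ ν := by
  rw [← rpow_natCast, ← rpow_neg_one, ← rpow_neg hσ.le, ← rpow_mul hσ.le, ← rpow_add hσ]
  norm_num
  ring_nf

theorem tendsto_logStudentTDensity_div_zero_one {ν σ : ℝ} (hν : 0 < ν) (hσ : 0 < σ) (μ : ℝ) :
    Tendsto (fun t => logStudentTDensity ν μ σ t / logStudentTDensity ν 0 1 t) atTop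
      (𝓝 (σ ^ ν)) := by
  have hratio := (tendsto_sq_sub_div_add_div_sq_div_add_atTop μ (2 * σ ^ 2) (ν / 2) 2 (ν / 2)
    two_ne_zero).comp tendsto_log_atTop
  rw [div_mul_cancel_left₀ two_ne_zero] at hratio
  have hlim : Tendsto (fun t => σ⁻¹ * (((log t - μ) ^ 2 / (2 * σ ^ 2) + ν / 2) /
      ((log t) ^ 2 / 2 + ν / 2)) ^ (-(1 / 2 + ν / 2))) atTop (𝓝 (σ ^ ν)) := by
    rw [← inv_mul_inv_sq_rpow hσ ν]
    exact (hratio.rpow_const (Or.inl (by positivity))).const_mul σ⁻¹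
  refine hlim.congr' ?_
  filter_upwards [eventually_ne_atTop 0] with t ht
  exact (logStudentTDensity_div_zero_one hν μ σ ht).symm

theorem stmt_12 (p : ℕ) (ν σ : ℝ) (hν : 0 < ν) (hσ : 0 < σ) (x β : Fin p → ℝ) :
    Filter.Tendsto
      (fun t : ℝ =>
        ((Real.Gamma ((1 + ν) / 2) * (ν / 2) ^ (ν / 2) /
            (Real.sqrt (2 * Real.pi) * Real.Gamma (ν / 2))) *
          σ⁻¹ * t⁻¹ *
          ((Real.log t - ∑ i, x i * β i) ^ 2 / (2 * σ ^ 2) + ν / 2) ^ (-(1/2 + ν / 2))) /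
        ((Real.Gamma ((1 + ν) / 2) * (ν / 2) ^ (ν / 2) /
            (Real.sqrt (2 * Real.pi) * Real.Gamma (ν / 2))) *
          (1 : ℝ)⁻¹ * t⁻¹ *
          ((Real.log t - 0) ^ 2 / (2 * (1 : ℝ) ^ 2) + ν / 2) ^ (-(1/2 + ν / 2))))
      Filter.atTop (nhds (σ ^ ν)) :=
  tendsto_logStudentTDensity_div_zero_one hν hσ (∑ i, x i * β i)
end
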